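/- arXiv:math/9412210 — 5 statements merged into one kernel-verified Lean document; each statement's English description precedes it below -/
import Mathlib

section
/- Let (R, m) be a d-dimensional Cohen–Macaulay local ring which is not a regular local ring. Let z_1, ..., z_d be a system of parameters of R (equivalently, a regular sequence of length d contained in m), set J = (z_1, ..., z_d) and I = J : m. Then I² = J·I. -/
open RingTheory.Sequence IsLocalRing

/-- A Noetherian local ring is Cohen–Macaulay iff its depth equals its Krull dimension;
equivalently, iff there is a regular sequence of length `dim R` inside the maximal ideal
(every system of parameters of a Cohen–Macaulay local ring is such a sequence). -/
def IsCohenMacaulayLocalRing (R : Type*) [CommRing R] [IsLocalRing R] : Prop :=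
  ∃ rs : List R, (∀ r ∈ rs, r ∈ maximalIdeal R) ∧ IsRegular R rs ∧
    (rs.length : WithBot ℕ∞) = ringKrullDim R

/-!
Let `J = (z₁, …, z_d)` and `I = J : m`. As `R` is not regular and `dim R ≤ μ(m)`, the maximal
ideal needs more than `d` generators, and in a local ring each `zᵢ` is a nonzerodivisor modulo
the others. Hence every representation `b t = ∑ eⱼ zⱼ` with `b ∈ I`, `t ∈ m` has all `eⱼ ∈ m`:
if `eᵢ` were a unit, `b t` would be a nonzerodivisor modulo `(zⱼ)_{j ≠ i}` and this forces
`m = (zⱼ)_{j ≠ i} + (t)`. Now for `a, b ∈ I` write `a b = ∑ cⱼ zⱼ`; for `t ∈ m` and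
`b t = ∑ fⱼ zⱼ` the relation `∑ (cⱼ t - a fⱼ) zⱼ = 0` gives `cⱼ t - a fⱼ ∈ J`, and `a fⱼ ∈ J`,
so every `cⱼ ∈ I` and `a b ∈ J I`.
-/

open Ideal

def IsRegularModOthers {R ι : Type*} [CommRing R] (z : ι → R) : Prop :=
  ∀ i r, r * z i ∈ span (z '' {i}ᶜ) → r ∈ span (z '' {i}ᶜ)

section Family

variable {R ι : Type*} [CommRing R] [Fintype ι] {z : ι → R}

lemma sum_mul_sub_mul_mem_span_image_compl (e : ι → R) (i : ι) :
    ∑ j, e j * z j - e i * z i ∈ span (z '' {i}ᶜ) := by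
  classical
  rw [← Finset.add_sum_erase _ _ (Finset.mem_univ i), add_sub_cancel_left]
  exact sum_mem fun j hj ↦ mul_mem_left _ _ (subset_span ⟨j, Finset.ne_of_mem_erase hj, rfl⟩)

lemma exists_sum_mul_eq_of_mem_span_range {x : R} (hx : x ∈ span (Set.range z)) :
    ∃ c : ι → R, ∑ j, c j * z j = x :=
  (Submodule.mem_span_range_iff_exists_fun R).mp hx

lemma span_range_le_sup_span_sum_mul {e : ι → R} {i : ι} (hi : IsUnit (e i)) :
    span (Set.range z) ≤ span (z '' {i}ᶜ) ⊔ span {∑ j, e j * z j} := by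
  rw [span_le]
  rintro _ ⟨j, rfl⟩
  by_cases hji : j = i
  · subst hji
    rw [SetLike.mem_coe, ← unit_mul_mem_iff_mem _ hi,
      ← sub_sub_cancel (∑ k, e k * z k) (e j * z j)]
    exact sub_mem (Submodule.mem_sup_right (mem_span_singleton_self _))
      (Submodule.mem_sup_left (sum_mul_sub_mul_mem_span_image_compl e j))
  · exact Submodule.mem_sup_left (subset_span ⟨j, hji, rfl⟩)

lemma spanFinrank_span_insert_image_compl_le (t : R) (i : ι) :
    (span (insert t (z '' {i}ᶜ))).spanFinrank ≤ Fintype.card ι := by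
  have hcompl : ({i}ᶜ : Set ι).ncard = Fintype.card ι - 1 := by
    rw [Set.ncard_compl, Set.ncard_singleton, Nat.card_eq_fintype_card]
  have hpos : 0 < Fintype.card ι := Fintype.card_pos_iff.mpr ⟨i⟩
  calc (span (insert t (z '' {i}ᶜ))).spanFinrank
      ≤ (insert t (z '' {i}ᶜ)).ncard :=
        Submodule.spanFinrank_span_le_ncard_of_finite (Set.toFinite _)
    _ ≤ (z '' {i}ᶜ).ncard + 1 := Set.ncard_insert_le _ _
    _ ≤ ({i}ᶜ : Set ι).ncard + 1 := by gcongr; exact Set.ncard_image_le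
    _ = Fintype.card ι := by omega

lemma spanFinrank_span_range_le : (span (Set.range z)).spanFinrank ≤ Fintype.card ι := by
  calc (span (Set.range z)).spanFinrank
      ≤ (Set.range z).ncard := Submodule.spanFinrank_span_le_ncard_of_finite (Set.toFinite _)
    _ ≤ Fintype.card ι := by
      rw [← Set.image_univ, ← Nat.card_eq_fintype_card, ← Set.ncard_univ]
      exact Set.ncard_image_le

lemma IsRegularModOthers.mem_span_of_sum_mul_eq_zero (hz : IsRegularModOthers z) {r : ι → R}
    (h : ∑ j, r j * z j = 0) (i : ι) : r i ∈ span (Set.range z) := by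
  have := sum_mul_sub_mul_mem_span_image_compl (z := z) r i
  rw [h, zero_sub, neg_mem_iff] at this
  exact span_mono (Set.image_subset_range _ _) (hz i _ this)

lemma IsRegularModOthers.mem_of_mul_sum_mem (hz : IsRegularModOthers z) {e : ι → R} {i : ι}
    (hi : IsUnit (e i)) {r : R} (hr : r * ∑ j, e j * z j ∈ span (z '' {i}ᶜ)) :
    r ∈ span (z '' {i}ᶜ) := by
  have hrei : r * e i * z i ∈ span (z '' {i}ᶜ) := by
    rw [mul_assoc, ← sub_sub_cancel (r * ∑ j, e j * z j) (r * (e i * z i)), ← mul_sub]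
    exact sub_mem hr (mul_mem_left _ _ (sum_mul_sub_mul_mem_span_image_compl e i))
  exact (mul_unit_mem_iff_mem _ hi).mp (hz i _ hrei)

lemma IsRegularModOthers.le_sup_span_of_mem_colon (hz : IsRegularModOthers z) {M : Ideal R}
    {e : ι → R} {i : ι} (hi : IsUnit (e i)) {t b : R} (hb : b ∈ (span (Set.range z)).colon M)
    (he : ∑ j, e j * z j = b * t) : M ≤ span (z '' {i}ᶜ) ⊔ span {t} := by
  intro s hs
  have hbs : b * s ∈ span (Set.range z) := Submodule.mem_colon.mp hb s hs
  obtain ⟨k, hk, y, hy, hky⟩ := Submodule.mem_sup.mp (span_range_le_sup_span_sum_mul hi hbs)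
  obtain ⟨c, rfl⟩ := mem_span_singleton'.mp hy
  have hsct : s - c * t ∈ span (z '' {i}ᶜ) := by
    refine hz.mem_of_mul_sum_mem hi ?_
    have : (s - c * t) * ∑ j, e j * z j = t * k := by
      rw [he] at hky ⊢
      linear_combination (-t) * hky
    exact this ▸ mul_mem_left _ _ hk
  rw [← sub_add_cancel s (c * t)]
  exact add_mem (Submodule.mem_sup_left hsct)
    (Submodule.mem_sup_right (mul_mem_left _ _ (mem_span_singleton_self t)))

variable [IsLocalRing R]

lemma colon_maximalIdeal_le_maximalIdeal (hzm : ∀ i, z i ∈ maximalIdeal R)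
    (hgen : Fintype.card ι < (maximalIdeal R).spanFinrank) :
    (span (Set.range z)).colon (maximalIdeal R) ≤ maximalIdeal R := by
  refine le_maximalIdeal fun htop ↦ hgen.not_ge ?_
  rw [Submodule.colon_eq_top_iff_subset] at htop
  have hJ : span (Set.range z) = maximalIdeal R :=
    le_antisymm (span_le.mpr (Set.range_subset_iff.mpr hzm)) htop
  exact hJ ▸ spanFinrank_span_range_le

lemma IsRegularModOthers.coeff_mem_maximalIdeal (hz : IsRegularModOthers z)
    (hzm : ∀ i, z i ∈ maximalIdeal R) (hgen : Fintype.card ι < (maximalIdeal R).spanFinrank)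
    {t b : R} (ht : t ∈ maximalIdeal R) (hb : b ∈ (span (Set.range z)).colon (maximalIdeal R))
    {e : ι → R} (he : ∑ j, e j * z j = b * t) (i : ι) : e i ∈ maximalIdeal R := by
  by_contra hei
  have hm : maximalIdeal R = span (insert t (z '' {i}ᶜ)) := by
    rw [span_insert, sup_comm]
    refine le_antisymm (hz.le_sup_span_of_mem_colon (notMem_maximalIdeal.mp hei) hb he)
      (sup_le ?_ (span_le.mpr (Set.singleton_subset_iff.mpr ht)))
    exact span_le.mpr (Set.image_subset_iff.mpr fun j _ ↦ hzm j)
  exact hgen.not_ge (hm ▸ spanFinrank_span_insert_image_compl_le t i)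

lemma IsRegularModOthers.coeff_mem_colon (hz : IsRegularModOthers z)
    (hzm : ∀ i, z i ∈ maximalIdeal R) (hgen : Fintype.card ι < (maximalIdeal R).spanFinrank)
    {a b : R} (ha : a ∈ (span (Set.range z)).colon (maximalIdeal R))
    (hb : b ∈ (span (Set.range z)).colon (maximalIdeal R))
    {c : ι → R} (hc : ∑ j, c j * z j = a * b) (i : ι) :
    c i ∈ (span (Set.range z)).colon (maximalIdeal R) := by
  refine Submodule.mem_colon.mpr fun t ht ↦ ?_
  obtain ⟨f, hf⟩ :=
    exists_sum_mul_eq_of_mem_span_range (x := b * t) (Submodule.mem_colon.mp hb t ht)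
  have hsyz : ∑ j, (c j * t - a * f j) * z j = 0 := by
    simp_rw [sub_mul, Finset.sum_sub_distrib, mul_right_comm _ t, mul_assoc a,
      ← Finset.sum_mul, ← Finset.mul_sum, hc, hf]
    ring
  have hafi : a * f i ∈ span (Set.range z) := Submodule.mem_colon.mp ha _
    (hz.coeff_mem_maximalIdeal hzm hgen ht hb hf i)
  simpa using add_mem (hz.mem_span_of_sum_mul_eq_zero hsyz i) hafi

theorem IsRegularModOthers.colon_maximalIdeal_sq (hz : IsRegularModOthers z)
    (hzm : ∀ i, z i ∈ maximalIdeal R) (hgen : Fintype.card ι < (maximalIdeal R).spanFinrank) :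
    (span (Set.range z)).colon (maximalIdeal R) ^ 2 =
      span (Set.range z) * (span (Set.range z)).colon (maximalIdeal R) := by
  rw [pow_two]
  refine le_antisymm ?_ (mul_mono_left le_colon)
  rw [mul_le]
  intro a ha b hb
  obtain ⟨c, hc⟩ := exists_sum_mul_eq_of_mem_span_range (x := a * b)
    (Submodule.mem_colon.mp ha b (colon_maximalIdeal_le_maximalIdeal hzm hgen hb))
  rw [← hc]
  exact sum_mem fun j _ ↦ mul_comm (z j) (c j) ▸
    mul_mem_mul (subset_span ⟨j, rfl⟩) (hz.coeff_mem_colon hzm hgen ha hb hc j)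

end Family

section Sequence

variable {R : Type*} [CommRing R]

lemma span_range_getElem (rs : List R) :
    span (Set.range fun i : Fin rs.length ↦ rs[i]) = ofList rs := by
  congr 1
  ext x
  simp [List.mem_iff_getElem, Fin.exists_iff]

lemma span_image_compl_getElem (rs : List R) (i : Fin rs.length) :
    span ((fun j : Fin rs.length ↦ rs[j]) '' {i}ᶜ) = ofList (rs.eraseIdx i) := by
  congr 1
  ext x
  simp [List.mem_eraseIdx_iff_getElem, Fin.exists_iff, Fin.ext_iff]

lemma isRegularModOthers_getElem [IsLocalRing R] [IsNoetherianRing R] {rs : List R}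
    (h : IsWeaklyRegular R rs) (hm : ∀ r ∈ rs, r ∈ maximalIdeal R) :
    IsRegularModOthers fun i : Fin rs.length ↦ rs[i] := by
  intro i r hr
  rw [span_image_compl_getElem] at hr ⊢
  have hperm : rs.Perm (rs.eraseIdx i ++ [rs[i]]) :=
    (List.getElem_cons_eraseIdx_perm i.isLt).symm.trans (List.perm_append_singleton _ _).symm
  have hlast := ((isWeaklyRegular_append_iff R _ _).mp
    (isWeaklyRegular_of_perm_of_subset_maximalIdeal h hperm hm)).2
  rw [isWeaklyRegular_singleton_iff] at hlast
  have := mem_of_isSMulRegular_quotient_of_smul_mem hlast (x := r) (by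
    rw [smul_eq_mul, mul_top, smul_eq_mul, mul_comm]; exact hr)
  rwa [smul_eq_mul, mul_top] at this

end Sequence

lemma spanFinrank_maximalIdeal_gt_of_not_regular {R : Type*} [CommRing R] [IsLocalRing R]
    [IsNoetherianRing R] {d : ℕ} (hdim : ringKrullDim R = d)
    (hnotreg : ¬ ∃ s : Finset R, s.card = d ∧ span (s : Set R) = maximalIdeal R) :
    d < (maximalIdeal R).spanFinrank := by
  have hle : d ≤ (maximalIdeal R).spanFinrank := by
    exact_mod_cast hdim ▸ ringKrullDim_le_spanFinrank_maximalIdeal R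
  refine hle.lt_of_ne fun heq ↦ hnotreg ?_
  obtain ⟨s, hs, hspan⟩ :=
    (IsNoetherian.noetherian (maximalIdeal R)).exists_span_finset_card_eq_spanFinrank
  exact ⟨s, hs.trans heq.symm, hspan⟩

theorem links_of_primes_stmt2_general {R : Type*} [CommRing R] [IsLocalRing R] [IsNoetherianRing R]
    (d : ℕ) (hdim : ringKrullDim R = d)
    (hnotreg : ¬ ∃ s : Finset R, s.card = d ∧ Ideal.span (s : Set R) = maximalIdeal R)
    (zs : List R) (hlen : zs.length = d)
    (hzm : ∀ z ∈ zs, z ∈ maximalIdeal R)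
    (hreg : IsRegular R zs)
    (J I : Ideal R) (hJ : J = Ideal.ofList zs)
    (hI : I = J.colon (maximalIdeal R)) :
    I ^ 2 = J * I := by
  have hgen := spanFinrank_maximalIdeal_gt_of_not_regular hdim hnotreg
  subst hJ hI hlen
  have hz := isRegularModOthers_getElem hreg.toIsWeaklyRegular hzm
  have := hz.colon_maximalIdeal_sq (fun i ↦ hzm _ (List.getElem_mem _)) (by simpa using hgen)
  rwa [span_range_getElem] at this

/-- Let `(R, m)` be a `d`-dimensional Cohen–Macaulay local ring which is
not regular, let `z₁, …, z_d` be a system of parameters (equivalently, a regular sequence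
of length `d` contained in `m`), `J = (z₁, …, z_d)` and `I = J : m`.  Then `I² = J·I`. -/
theorem links_of_primes_stmt2 {R : Type*} [CommRing R] [IsLocalRing R] [IsNoetherianRing R]
    (hCM : IsCohenMacaulayLocalRing R)
    (d : ℕ) (hdim : ringKrullDim R = d)
    (hnotreg : ¬ ∃ s : Finset R, s.card = d ∧ Ideal.span (s : Set R) = maximalIdeal R)
    (zs : List R) (hlen : zs.length = d)
    (hzm : ∀ z ∈ zs, z ∈ maximalIdeal R)
    (hreg : IsRegular R zs)
    (J I : Ideal R) (hJ : J = Ideal.ofList zs)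
    (hI : I = J.colon (maximalIdeal R)) :
    I ^ 2 = J * I :=
  links_of_primes_stmt2_general d hdim hnotreg zs hlen hzm hreg J I hJ hI
end

section
/- Let (R, m) be a d-dimensional Cohen–Macaulay local ring which is not a regular local ring. Let z_1, ..., z_d be a system of parameters of R, set J = (z_1, ..., z_d) and I = J : m. Then m·I = m·J. -/
open RingTheory.Sequence IsLocalRing

/-- Let `(R, m)` be a `d`-dimensional Cohen–Macaulay local ring which is
not regular, let `z₁, …, z_d` be a system of parameters (equivalently, a regular sequence
of length `d` contained in `m`), `J = (z₁, …, z_d)` and `I = J : m`.  Then `m·I = m·J`. -/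
theorem links_of_primes_stmt3 {R : Type*} [CommRing R] [IsLocalRing R] [IsNoetherianRing R]
    (hCM : IsCohenMacaulayLocalRing R)
    (d : ℕ) (hdim : ringKrullDim R = d)
    (hnotreg : ¬ ∃ s : Finset R, s.card = d ∧ Ideal.span (s : Set R) = maximalIdeal R)
    (zs : List R) (hlen : zs.length = d)
    (hzm : ∀ z ∈ zs, z ∈ maximalIdeal R)
    (hreg : IsRegular R zs)
    (J I : Ideal R) (hJ : J = Ideal.ofList zs)
    (hI : I = J.colon (maximalIdeal R)) :
    maximalIdeal R * I = maximalIdeal R * J := by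
  subst hJ hI hlen
  classical
  apply le_antisymm
  · -- hard direction : m * I ≤ m * J
    rw [Ideal.mul_le]
    intro a ha x hx
    by_contra hax
    -- `a * x ∈ J`
    have haxJ : a * x ∈ Ideal.ofList zs := by
      have := Submodule.mem_colon.mp hx a ha
      simpa [smul_eq_mul, mul_comm] using this
    -- write `a * x` as a combination of the `z_j`
    have hset : { r | r ∈ zs } = Set.range (fun j : Fin zs.length => zs.get j) := by
      ext r; simp [List.mem_iff_get]
    have hJr : Ideal.ofList zs = Ideal.span (Set.range fun j : Fin zs.length => zs.get j) :=
      congrArg Ideal.span hset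
    rw [hJr, Ideal.mem_span_range_iff_exists_fun] at haxJ
    obtain ⟨c, hc⟩ := haxJ
    -- some coefficient is a unit
    have hex : ∃ i, c i ∉ maximalIdeal R := by
      by_contra hall
      push_neg at hall
      apply hax
      rw [← hc]
      exact Ideal.sum_mem _ fun j _ => Ideal.mul_mem_mul (hall j)
        (Ideal.subset_span (show zs.get j ∈ {r | r ∈ zs} from zs.getElem_mem j.isLt))
    obtain ⟨i, hci⟩ := hex
    have hciu : IsUnit (c i) := by
      by_contra h; exact hci h
    have unit_cancel : ∀ (S : Ideal R) (w : R), c i * w ∈ S → w ∈ S := by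
      intro S w hw
      obtain ⟨u, hu⟩ := hciu
      have he : w = ↑u⁻¹ * (c i * w) := by
        rw [← hu, ← mul_assoc, Units.inv_mul, one_mul]
      rw [he]; exact S.mul_mem_left _ hw
    set z := zs.get i with hzdef
    set L := zs.eraseIdx (i : ℕ) with hLdef
    set K : Ideal R := Ideal.ofList L with hKdef
    have hzmem : z ∈ zs := zs.getElem_mem i.isLt
    -- membership of the other `z_j` in `K`
    have hmemL : ∀ j : Fin zs.length, j ≠ i → zs.get j ∈ L := by
      intro j hj
      rw [hLdef, List.mem_eraseIdx_iff_getElem]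
      exact ⟨j, j.isLt, fun h => hj (Fin.ext h), rfl⟩
    have hmemK : ∀ j : Fin zs.length, j ≠ i → zs.get j ∈ K :=
      fun j hj => Ideal.subset_span (hmemL j hj)
    -- permutations of the regular sequence
    have hperm0 : zs.Perm (z :: L) := by
      refine (List.perm_cons_erase hzmem).trans (List.Perm.cons z ?_)
      exact List.erase_getElem i.isLt
    have hperm2 : zs.Perm (L ++ [z]) :=
      hperm0.trans (List.perm_append_singleton z L).symm
    have hreg1 : IsRegular R (z :: L) := IsLocalRing.isRegular_of_perm hreg hperm0
    have hreg2 : IsRegular R (L ++ [z]) := IsLocalRing.isRegular_of_perm hreg hperm2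
    -- `z` is a nonzerodivisor on `R`
    have hz_reg : IsSMulRegular R z := by
      have h1 := hreg1.toIsWeaklyRegular
      rw [isWeaklyRegular_cons_iff] at h1
      exact h1.1
    -- `z` is a nonzerodivisor modulo `K`
    have hsmK : (Ideal.ofList L • ⊤ : Submodule R R) = K := by
      rw [Ideal.smul_eq_mul, Ideal.mul_top]
    have hKz : ∀ w : R, w * z ∈ K → w ∈ K := by
      have h2 := hreg2.toIsWeaklyRegular
      rw [isWeaklyRegular_append_iff] at h2
      have h3 := h2.2
      rw [isWeaklyRegular_singleton_iff] at h3
      intro w hw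
      have h4 : z • (Submodule.Quotient.mk w :
          R ⧸ (Ideal.ofList L • ⊤ : Submodule R R)) = z • (0 : _) := by
        rw [smul_zero, ← Submodule.Quotient.mk_smul, Submodule.Quotient.mk_eq_zero, hsmK]
        simpa [smul_eq_mul, mul_comm] using hw
      have h5 := h3 h4
      rwa [Submodule.Quotient.mk_eq_zero, hsmK] at h5
    -- the splitting of the sum
    have hsum : ∑ j ∈ Finset.univ.erase i, c j * zs.get j ∈ K := by
      refine Ideal.sum_mem _ fun j hj => ?_
      exact K.mul_mem_left _ (hmemK j (Finset.ne_of_mem_erase hj))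
    have hsplit : a * x = c i * z + ∑ j ∈ Finset.univ.erase i, c j * zs.get j := by
      rw [← hc]
      exact (Finset.add_sum_erase _ _ (Finset.mem_univ i)).symm
    -- `x` is a nonzerodivisor modulo `K`
    have hKx : ∀ w : R, w * x ∈ K → w ∈ K := by
      intro w hw
      have h1 : w * (a * x) ∈ K := by
        have he : w * (a * x) = a * (w * x) := by ring
        rw [he]; exact K.mul_mem_left a hw
      have h2 : (w * c i) * z ∈ K := by
        have he : (w * c i) * z = w * (a * x) - w * ∑ j ∈ Finset.univ.erase i, c j * zs.get j := by
          rw [hsplit]; ring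
        rw [he]
        exact Submodule.sub_mem _ h1 (K.mul_mem_left w hsum)
      have h3 := hKz _ h2
      exact unit_cancel K w (by rwa [mul_comm (c i) w])
    -- `J ≤ (a*x) + K`
    have hJle : Ideal.ofList zs ≤ Ideal.span {a * x} ⊔ K := by
      rw [Ideal.ofList, Ideal.span_le]
      intro r hr
      rw [Set.mem_setOf_eq, List.mem_iff_get] at hr
      obtain ⟨j, rfl⟩ := hr
      by_cases hji : j = i
      · subst hji
        refine SetLike.mem_coe.mpr (unit_cancel _ _ ?_)
        have he : c j * zs.get j = a * x - ∑ k ∈ Finset.univ.erase j, c k * zs.get k := by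
          rw [hsplit]; ring
        rw [he]
        exact Submodule.sub_mem _
          (Submodule.mem_sup_left (Ideal.mem_span_singleton_self _))
          (Submodule.mem_sup_right hsum)
      · exact SetLike.mem_coe.mpr (Submodule.mem_sup_right (hmemK j hji))
    -- `m ≤ (a) + K`
    have hmle : maximalIdeal R ≤ Ideal.span {a} ⊔ K := by
      intro u hu
      have hux : u * x ∈ Ideal.ofList zs := by
        have := Submodule.mem_colon.mp hx u hu
        simpa [smul_eq_mul, mul_comm] using this
      have h1 := hJle hux
      rw [Submodule.mem_sup] at h1
      obtain ⟨y, hy, k, hk, hyk⟩ := h1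
      rw [Ideal.mem_span_singleton'] at hy
      obtain ⟨s, rfl⟩ := hy
      have h5 : (u - s * a) * x ∈ K := by
        have he : (u - s * a) * x = u * x - s * (a * x) := by ring
        rw [he, ← hyk]
        simpa using hk
      have h6 := hKx _ h5
      have he : u = s * a + (u - s * a) := by ring
      rw [he]
      exact Submodule.add_mem _
        (Submodule.mem_sup_left (Ideal.mem_span_singleton'.mpr ⟨s, rfl⟩))
        (Submodule.mem_sup_right h6)
    -- the generating set
    set s₀ : Set R := insert a { r | r ∈ L } with hs₀def
    have hs₀m : s₀ ⊆ (maximalIdeal R : Set R) := by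
      rintro r (rfl | hr)
      · exact ha
      · exact hzm r (List.mem_of_mem_eraseIdx hr)
    have hspan₀ : maximalIdeal R ≤ Ideal.span s₀ := by
      rw [hs₀def, Ideal.span_insert]
      exact hmle
    -- the maximal ideal is infinite
    have hzm' : z ∈ maximalIdeal R := hzm z hzmem
    have hone : (1 : R) ∉ maximalIdeal R := fun h => h isUnit_one
    have hkey : ∀ {j k : ℕ}, j < k → z ^ (j + 1) ≠ z ^ (k + 1) := by
      intro j k hjk heq
      have he : z ^ (k + 1) = z ^ (j + 1) * z ^ (k - j) := by
        rw [← pow_add]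
        congr 1
        omega
      have h1 : z ^ (j + 1) • (1 : R) = z ^ (j + 1) • z ^ (k - j) := by
        simpa [smul_eq_mul, ← he] using heq
      have h2 := (hz_reg.pow (j + 1)) h1
      have h3 : z ^ (k - j) ∈ maximalIdeal R :=
        Ideal.pow_mem_of_mem _ hzm' _ (by omega)
      rw [← h2] at h3
      exact hone h3
    have hminf : (maximalIdeal R : Set R).Infinite := by
      apply Set.infinite_of_injective_forall_mem (f := fun k : ℕ => z ^ (k + 1))
      · intro j k h
        rcases lt_trichotomy j k with h' | h' | h'
        · exact absurd h (hkey h')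
        · exact h'
        · exact absurd h.symm (hkey h')
      · intro k
        exact Ideal.pow_mem_of_mem _ hzm' _ (by omega)
    -- pad `s₀` to a set of exactly `zs.length` elements
    have hs₀fin : s₀.Finite := (L.finite_toSet).insert a
    have hs₀card : s₀.ncard ≤ zs.length := by
      have h1 : s₀.ncard ≤ { r | r ∈ L }.ncard + 1 := Set.ncard_insert_le a _
      have h2 : { r | r ∈ L }.ncard ≤ L.length := by
        rw [show { r | r ∈ L } = (↑L.toFinset : Set R) by ext r; simp,
          Set.ncard_coe_finset]
        exact L.toFinset_card_le
      have h3 : L.length + 1 = zs.length := List.length_eraseIdx_add_one i.isLt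
      omega
    obtain ⟨t, hst, htm, htcard⟩ :=
      Set.Infinite.exists_superset_ncard_eq hminf hs₀m hs₀fin hs₀card
    have htfin : t.Finite := by
      apply Set.finite_of_ncard_ne_zero
      rw [htcard]
      have := i.pos
      omega
    refine hnotreg ⟨htfin.toFinset, ?_, ?_⟩
    · rw [← Set.ncard_eq_toFinset_card t htfin, htcard]
    · rw [Set.Finite.coe_toFinset]
      apply le_antisymm
      · rw [Ideal.span_le]
        exact htm
      · exact le_trans hspan₀ (Ideal.span_mono hst)
  · -- easy direction : m * J ≤ m * I
    apply Ideal.mul_mono_right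
    intro r hr
    rw [Submodule.mem_colon]
    intro p hp
    exact Ideal.mul_mem_right p _ hr
end

section
/- Let (R, m) be a Cohen–Macaulay local ring and let p be a prime ideal of R of height g such that the localization R_p is not a regular local ring. Let z_1, ..., z_g be a regular sequence on R contained in p, set J = (z_1, ..., z_g) and I = J : p. Then J ⊆ I and I² = J·I; in particular J is a reduction of I with reduction number at most 1, so I is an equimultiple ideal. -/
/-!
Write `J = (z₁, …, z_g)` and `I = J : p`. If `I ⊄ p`, a unit of `Rₚ` multiplies `pRₚ` into
`JRₚ`, so `pRₚ` is generated by `g = dim Rₚ` elements and `Rₚ` is regular; hence `I ⊆ p` and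
`ab ∈ J` for `a, b ∈ I`, say `ab = ∑ cⱼ zⱼ`. It remains to see `cᵢ t ∈ J` for `t ∈ p`. Write
`at = ∑ dⱼ zⱼ`. If some `dᵢ ∉ p`, then `t` can replace `zᵢ` and `pRₚ` is again generated by `g`
elements. So all `dⱼ ∈ p`, and `∑ (t cⱼ - dⱼ b) zⱼ = t(ab) - (at)b = 0` is a syzygy of a regular
sequence, whose coefficients lie in `J`; since `dᵢ b ∈ J`, so does `cᵢ t`.
-/

open RingTheory.Sequence IsLocalRing

/-- A local ring is regular iff its maximal ideal can be generated by `dim R` elements. -/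
def IsRegularLocalRing' (R : Type*) [CommRing R] [IsLocalRing R] : Prop :=
  ∃ s : Finset R, Ideal.span (s : Set R) = maximalIdeal R ∧
    (s.card : WithBot ℕ∞) = ringKrullDim R

namespace Ideal

open Finset

variable {R : Type*} [CommRing R]

lemma getD_mem_ofList {l : List R} {i : ℕ} (h : i < l.length) : l.getD i 0 ∈ ofList l := by
  rw [List.getD_eq_getElem l 0 h]
  exact subset_span (List.getElem_mem h)

lemma mem_ofList_iff_exists_sum {l : List R} {x : R} :
    x ∈ ofList l ↔ ∃ c : ℕ → R, x = ∑ i ∈ range l.length, c i * l.getD i 0 := by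
  induction l generalizing x with
  | nil => simp
  | cons r l ih =>
    simp only [ofList_cons, List.length_cons, sum_range_succ', List.getD_cons_succ,
      List.getD_cons_zero, Submodule.mem_sup, mem_span_singleton', ih]
    constructor
    · rintro ⟨_, ⟨a, rfl⟩, _, ⟨c, rfl⟩, rfl⟩
      exact ⟨fun i => Nat.casesOn i a c, by simp [add_comm]⟩
    · rintro ⟨c, rfl⟩
      exact ⟨_, ⟨c 0, rfl⟩, _, ⟨fun i => c (i + 1), rfl⟩, add_comm _ _⟩

lemma ofList_eraseIdx_sup_span_getElem {l : List R} {i : ℕ} (h : i < l.length) :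
    ofList (l.eraseIdx i) ⊔ span {l[i]} = ofList l := by
  rw [← ofList_singleton, ← ofList_append]
  exact congrArg span (Set.ext fun x =>
    ((List.perm_append_singleton _ _).trans (List.getElem_cons_eraseIdx_perm h)).mem_iff)

lemma sum_sub_mem_ofList_eraseIdx {l : List R} (c : ℕ → R) {i : ℕ} (h : i < l.length) :
    ∑ j ∈ range l.length, c j * l.getD j 0 - c i * l[i] ∈ ofList (l.eraseIdx i) := by
  rw [← List.getD_eq_getElem l 0 h, ← sum_erase_eq_sub (mem_range.mpr h)]
  refine Submodule.sum_mem _ fun j hj => mul_mem_left _ _ (subset_span ?_)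
  obtain ⟨hji, hj⟩ := mem_erase.mp hj
  rw [List.getD_eq_getElem l 0 (mem_range.mp hj)]
  exact List.mem_eraseIdx_iff_getElem.mpr ⟨j, mem_range.mp hj, hji, rfl⟩

lemma mul_mem_of_mem_colon {J K : Ideal R} {a x : R} (ha : a ∈ J.colon K) (hx : x ∈ K) :
    a * x ∈ J :=
  Submodule.mem_colon.mp ha x hx

end Ideal

namespace RingTheory.Sequence.IsWeaklyRegular

variable {R : Type*} [CommRing R]

open Ideal Finset

lemma mem_ofList_of_mul_mem {l : List R} {z x : R}
    (h : IsWeaklyRegular R (l ++ [z])) (hx : z * x ∈ ofList l) : x ∈ ofList l := by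
  have hz := (isWeaklyRegular_singleton_iff _ z).mp ((isWeaklyRegular_append_iff R l [z]).mp h).2
  simpa using mem_of_isSMulRegular_quotient_of_smul_mem hz (x := x) (by simpa using hx)

lemma coeff_mem_ofList_of_sum_eq_zero {l : List R} (h : IsWeaklyRegular R l)
    {c : ℕ → R} (hc : ∑ j ∈ range l.length, c j * l.getD j 0 = 0) {i : ℕ} (hi : i < l.length) :
    c i ∈ ofList l := by
  induction l using List.reverseRecOn generalizing c i with
  | nil => simp at hi
  | append_singleton l z ih =>
    have hmono : ofList l ≤ ofList (l ++ [z]) := by rw [ofList_append]; exact le_sup_left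
    have hsplit : ∑ j ∈ range l.length, c j * l.getD j 0 + c l.length * z = 0 := by
      rw [List.length_append, List.length_singleton, sum_range_succ,
        List.getD_append_right _ _ _ _ le_rfl, Nat.sub_self,
        sum_congr rfl fun j hj => by rw [List.getD_append _ _ _ _ (mem_range.mp hj)]] at hc
      simpa using hc
    have hlast : c l.length ∈ ofList l := h.mem_ofList_of_mul_mem <| by
      rw [mul_comm, eq_neg_of_add_eq_zero_right hsplit]
      exact neg_mem (mem_ofList_iff_exists_sum.mpr ⟨c, rfl⟩)
    obtain ⟨e, he⟩ := mem_ofList_iff_exists_sum.mp hlast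
    have hshift : ∑ j ∈ range l.length, (c j + e j * z) * l.getD j 0 = 0 := by
      have hexpand : ∑ j ∈ range l.length, (c j + e j * z) * l.getD j 0 =
          ∑ j ∈ range l.length, c j * l.getD j 0 + c l.length * z := by
        rw [he, sum_mul, ← sum_add_distrib]
        exact sum_congr rfl fun j _ => by ring
      rw [hexpand, hsplit]
    rcases (Nat.lt_succ_iff_lt_or_eq.mp (by simpa using hi) : i < l.length ∨ i = l.length)
      with hi | rfl
    · have hz : z ∈ ofList (l ++ [z]) := subset_span (by simp)
      rw [← add_sub_cancel_right (c i) (e i * z)]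
      exact sub_mem (hmono (ih ((isWeaklyRegular_append_iff R l [z]).mp h).1 hshift hi))
        (mul_mem_left _ _ hz)
    · exact hmono hlast

end RingTheory.Sequence.IsWeaklyRegular

lemma isRegularLocalRing'_of_ofList_eq_maximalIdeal {A : Type*} [CommRing A] [IsLocalRing A]
    [IsNoetherianRing A] {l : List A} (hl : Ideal.ofList l = maximalIdeal A)
    (hlen : (l.length : WithBot ℕ∞) ≤ ringKrullDim A) : IsRegularLocalRing' A := by
  classical
  have hspan : Ideal.span (l.toFinset : Set A) = maximalIdeal A := by
    rw [← hl, List.coe_toFinset]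
  refine ⟨l.toFinset, hspan, le_antisymm (hlen.trans' (by exact_mod_cast l.toFinset_card_le)) ?_⟩
  calc ringKrullDim A ≤ (maximalIdeal A).spanFinrank := ringKrullDim_le_spanFinrank_maximalIdeal A
    _ ≤ l.toFinset.card := by
      rw [← hspan, ← Set.ncard_coe_finset]
      exact_mod_cast Submodule.spanFinrank_span_le_ncard_of_finite l.toFinset.finite_toSet

lemma le_span_singleton_sup_of_isUnit {A : Type*} [CommRing A] {K M : Ideal A} {ζ a t α : A}
    (hζ : ∀ x, ζ * x ∈ K → x ∈ K) (hα : IsUnit α) (haM : ∀ v ∈ M, a * v ∈ K ⊔ Ideal.span {ζ})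
    (hat : a * t - α * ζ ∈ K) : M ≤ Ideal.span {t} ⊔ K := by
  intro v hv
  obtain ⟨κ, hκ, _, hw, hav⟩ := Submodule.mem_sup.mp (haM v hv)
  obtain ⟨w, rfl⟩ := Ideal.mem_span_singleton'.mp hw
  have hdiff : α * v - t * w ∈ K := hζ _ <| by
    have : ζ * (α * v - t * w) = t * κ - v * (a * t - α * ζ) := by linear_combination (-t) * hav
    rw [this]
    exact sub_mem (K.mul_mem_left t hκ) (K.mul_mem_left v hat)
  have hαv : α * v ∈ Ideal.span {t} ⊔ K := by
    rw [← sub_add_cancel (α * v) (t * w)]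
    exact add_mem (Submodule.mem_sup_right hdiff)
      (Submodule.mem_sup_left (Ideal.mul_mem_right _ _ (Ideal.mem_span_singleton_self t)))
  obtain ⟨u, rfl⟩ := hα
  simpa using Ideal.mul_mem_left _ (↑u⁻¹ : A) hαv

section LocalizationAtPrime

variable {R : Type*} [CommRing R] (p : Ideal R) [p.IsPrime]

open Ideal Finset

lemma span_singleton_mul_maximalIdeal_le_map {J : Ideal R} {a : R} (ha : a ∈ J.colon p) :
    span {algebraMap R (Localization.AtPrime p) a} * maximalIdeal (Localization.AtPrime p) ≤
      J.map (algebraMap R (Localization.AtPrime p)) := by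
  rw [← Localization.AtPrime.map_eq_maximalIdeal, ← Set.image_singleton, ← Ideal.map_span,
    ← Ideal.map_mul]
  exact map_mono (span_singleton_mul_le_iff.mpr fun x hx => mul_mem_of_mem_colon ha hx)

variable [IsNoetherianRing R]

lemma isRegularLocalRing'_of_maximalIdeal_le_map {l : List R} (hlp : ∀ z ∈ l, z ∈ p)
    (hlen : (l.length : WithBot ℕ∞) ≤ ringKrullDim (Localization.AtPrime p))
    (hm : maximalIdeal (Localization.AtPrime p) ≤
      (ofList l).map (algebraMap R (Localization.AtPrime p))) :
    IsRegularLocalRing' (Localization.AtPrime p) := by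
  refine isRegularLocalRing'_of_ofList_eq_maximalIdeal (l := l.map (algebraMap R _)) ?_
    (by simpa using hlen)
  rw [← map_ofList]
  refine le_antisymm ?_ hm
  rw [← Localization.AtPrime.map_eq_maximalIdeal]
  exact map_mono (span_le.mpr hlp)

variable {p}

lemma colon_le_of_not_isRegularLocalRing'
    (hnotreg : ¬ IsRegularLocalRing' (Localization.AtPrime p)) {zs : List R} (hzp : ∀ z ∈ zs, z ∈ p)
    (hlen : (zs.length : WithBot ℕ∞) ≤ ringKrullDim (Localization.AtPrime p)) :
    (ofList zs).colon p ≤ p := by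
  intro a ha
  by_contra hap
  refine hnotreg (isRegularLocalRing'_of_maximalIdeal_le_map p hzp hlen ?_)
  have hunit := (IsLocalization.AtPrime.isUnit_to_map_iff (Localization.AtPrime p) p a).mpr hap
  simpa [span_singleton_eq_top.mpr hunit] using span_singleton_mul_maximalIdeal_le_map p ha

/-- Here `pRₚ` is generated by `t` and the `zⱼ` with `j ≠ i`, because `zᵢ` is regular modulo
the other `zⱼ`. -/
lemma isRegularLocalRing'_of_coeff_notMem {zs : List R} (hreg : IsWeaklyRegular R zs)
    (hzp : ∀ z ∈ zs, z ∈ p)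
    (hlen : (zs.length : WithBot ℕ∞) ≤ ringKrullDim (Localization.AtPrime p))
    {a t : R} (ha : a ∈ (ofList zs).colon p) (ht : t ∈ p) {c : ℕ → R}
    (hc : a * t = ∑ j ∈ range zs.length, c j * zs.getD j 0) {i : ℕ} (hi : i < zs.length)
    (hci : c i ∉ p) : IsRegularLocalRing' (Localization.AtPrime p) := by
  set F := algebraMap R (Localization.AtPrime p)
  have hlen' : (t :: zs.eraseIdx i).length = zs.length := by
    rw [List.length_cons, List.length_eraseIdx_of_lt hi]; omega
  refine isRegularLocalRing'_of_maximalIdeal_le_map p (l := t :: zs.eraseIdx i) ?_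
    (by rwa [hlen']) ?_
  · intro z hz
    rcases List.mem_cons.mp hz with rfl | hz
    exacts [ht, hzp z (List.mem_of_mem_eraseIdx hz)]
  have hζ : ∀ x, F zs[i] * x ∈ (ofList (zs.eraseIdx i)).map F →
      x ∈ (ofList (zs.eraseIdx i)).map F := by
    have hperm : (zs.map F).Perm ((zs.eraseIdx i ++ [zs[i]]).map F) :=
      ((List.perm_append_singleton _ _).trans (List.getElem_cons_eraseIdx_perm hi)).symm.map F
    have hregp := IsLocalRing.isRegular_of_perm
      (hreg.isRegular_of_isLocalization_of_mem _ p hzp) hperm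
    rw [List.map_append, List.map_singleton] at hregp
    intro x hx
    rw [map_ofList] at hx ⊢
    exact hregp.toIsWeaklyRegular.mem_ofList_of_mul_mem hx
  rw [ofList_cons, Ideal.map_sup, Ideal.map_span, Set.image_singleton]
  have hunit := (IsLocalization.AtPrime.isUnit_to_map_iff (Localization.AtPrime p) p _).mpr hci
  refine le_span_singleton_sup_of_isUnit (a := F a) hζ hunit (fun v hv => ?_) ?_
  · rw [← Set.image_singleton, ← Ideal.map_span, ← Ideal.map_sup,
      ofList_eraseIdx_sup_span_getElem hi]
    exact span_singleton_mul_maximalIdeal_le_map p ha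
      (Ideal.mul_mem_mul (mem_span_singleton_self _) hv)
  · rw [← map_mul, ← map_mul, ← map_sub, hc]
    exact mem_map_of_mem F (sum_sub_mem_ofList_eraseIdx c hi)

lemma coeff_mem_colon_of_not_isRegularLocalRing'
    (hnotreg : ¬ IsRegularLocalRing' (Localization.AtPrime p)) {zs : List R}
    (hreg : IsWeaklyRegular R zs) (hzp : ∀ z ∈ zs, z ∈ p)
    (hlen : (zs.length : WithBot ℕ∞) ≤ ringKrullDim (Localization.AtPrime p))
    {a b : R} (ha : a ∈ (ofList zs).colon p) (hb : b ∈ (ofList zs).colon p) {c : ℕ → R}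
    (hc : a * b = ∑ j ∈ range zs.length, c j * zs.getD j 0) {i : ℕ} (hi : i < zs.length) :
    c i ∈ (ofList zs).colon p := by
  refine Submodule.mem_colon.mpr fun t ht => ?_
  rw [smul_eq_mul]
  obtain ⟨d, hd⟩ := mem_ofList_iff_exists_sum.mp (mul_mem_of_mem_colon ha ht)
  have hdp : ∀ j < zs.length, d j ∈ p := fun j hj => by_contra fun hdj =>
    hnotreg (isRegularLocalRing'_of_coeff_notMem hreg hzp hlen ha ht hd hj hdj)
  have hsyz : ∑ j ∈ range zs.length, (t * c j - d j * b) * zs.getD j 0 = 0 := by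
    have hexpand : ∑ j ∈ range zs.length, (t * c j - d j * b) * zs.getD j 0 =
        t * (a * b) - (a * t) * b := by
      rw [hc, hd, mul_sum, sum_mul, ← sum_sub_distrib]
      exact sum_congr rfl fun j _ => by ring
    rw [hexpand]; ring
  have hdb : d i * b ∈ ofList zs := by
    rw [mul_comm]; exact mul_mem_of_mem_colon hb (hdp i hi)
  rw [show c i * t = (t * c i - d i * b) + d i * b by ring]
  exact add_mem (hreg.coeff_mem_ofList_of_sum_eq_zero hsyz hi) hdb

theorem colon_sq_eq_mul_of_not_isRegularLocalRing'
    (hnotreg : ¬ IsRegularLocalRing' (Localization.AtPrime p)) {zs : List R}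
    (hreg : IsWeaklyRegular R zs) (hzp : ∀ z ∈ zs, z ∈ p)
    (hlen : (zs.length : WithBot ℕ∞) ≤ ringKrullDim (Localization.AtPrime p)) :
    ((ofList zs).colon p) ^ 2 = ofList zs * (ofList zs).colon p := by
  rw [pow_two]
  refine le_antisymm (mul_le.mpr fun a ha b hb => ?_) (mul_mono_left le_colon)
  obtain ⟨c, hc⟩ := mem_ofList_iff_exists_sum.mp
    (mul_mem_of_mem_colon ha (colon_le_of_not_isRegularLocalRing' hnotreg hzp hlen hb))
  rw [hc]
  refine Submodule.sum_mem _ fun i hi => ?_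
  rw [mul_comm (c i)]
  exact Ideal.mul_mem_mul (getD_mem_ofList (mem_range.mp hi))
    (coeff_mem_colon_of_not_isRegularLocalRing' hnotreg hreg hzp hlen ha hb hc (mem_range.mp hi))

end LocalizationAtPrime

theorem links_of_primes_stmt4_general {R : Type*} [CommRing R] [IsNoetherianRing R]
    (p : Ideal R) [hp : p.IsPrime] (g : ℕ)
    (hht : ringKrullDim (Localization.AtPrime p) = g)
    (hnotreg : ¬ IsRegularLocalRing' (Localization.AtPrime p))
    (zs : List R) (hlen : zs.length = g) (hzp : ∀ z ∈ zs, z ∈ p)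
    (hreg : IsRegular R zs)
    (J I : Ideal R) (hJ : J = Ideal.ofList zs) (hI : I = J.colon p) :
    J ≤ I ∧ I ^ 2 = J * I := by
  subst hJ hI
  have hdim : (zs.length : WithBot ℕ∞) ≤ ringKrullDim (Localization.AtPrime p) := by
    rw [hht, hlen]
  exact ⟨Ideal.le_colon,
    colon_sq_eq_mul_of_not_isRegularLocalRing' hnotreg hreg.toIsWeaklyRegular hzp hdim⟩

/-- Let `(R, m)` be a Cohen–Macaulay local ring, `p` a prime of height `g`
(i.e. `dim R_p = g`) with `R_p` not regular, `z₁, …, z_g` a regular sequence contained in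
`p`, `J = (z₁, …, z_g)` and `I = J : p`.  Then `J ⊆ I` and `I² = J·I`; in particular `J`
is a reduction of `I` with reduction number at most `1`, so `I` is equimultiple. -/
theorem links_of_primes_stmt4 {R : Type*} [CommRing R] [IsLocalRing R] [IsNoetherianRing R]
    (hCM : IsCohenMacaulayLocalRing R)
    (p : Ideal R) [hp : p.IsPrime] (g : ℕ)
    (hht : ringKrullDim (Localization.AtPrime p) = g)
    (hnotreg : ¬ IsRegularLocalRing' (Localization.AtPrime p))
    (zs : List R) (hlen : zs.length = g) (hzp : ∀ z ∈ zs, z ∈ p)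
    (hreg : IsRegular R zs)
    (J I : Ideal R) (hJ : J = Ideal.ofList zs) (hI : I = J.colon p) :
    J ≤ I ∧ I ^ 2 = J * I :=
  links_of_primes_stmt4_general p (hp := hp) g hht hnotreg zs hlen hzp hreg J I hJ hI
end

section
/- Let R be a commutative Noetherian ring and let J ⊆ I be ideals of R such that J is generated by a regular sequence z_1, ..., z_g. Then every associated prime of R/JI is an associated prime of R/J or an associated prime of R/I, i.e. Ass(R/JI) ⊆ Ass(R/J) ∪ Ass(R/I). -/
/-!
Write `J = (z₁, …, zₙ)`. Because the sequence is regular, a relation `∑ cᵢ zᵢ = 0` forces every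
`cᵢ` into `J`; with `J ⊆ I` this says that `c ↦ ∑ cᵢ zᵢ` induces an injection `(R/I)ⁿ → R/JI`,
whose image is `J/JI`. The exact sequence `0 → (R/I)ⁿ → R/JI → R/J → 0` then gives
`Ass(R/JI) ⊆ Ass((R/I)ⁿ) ∪ Ass(R/J) = Ass(R/I) ∪ Ass(R/J)`.
-/

open RingTheory.Sequence Submodule

namespace associatedPrimes

variable {R M : Type*} [CommRing R] [AddCommGroup M] [Module R M]

theorem pi_fin_subset : ∀ n : ℕ, associatedPrimes R (Fin n → M) ⊆ associatedPrimes R M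
  | 0 => by simp [associatedPrimes.eq_empty_of_subsingleton]
  | n + 1 => by
    rw [← LinearEquiv.AssociatedPrimes.eq (Fin.consLinearEquiv R fun _ : Fin (n + 1) => M),
      associatedPrimes.prod]
    exact Set.union_subset le_rfl (pi_fin_subset n)

theorem pi_subset {ι : Type*} [Finite ι] : associatedPrimes R (ι → M) ⊆ associatedPrimes R M := by
  obtain ⟨n, ⟨e⟩⟩ := Finite.exists_equiv_fin ι
  rw [LinearEquiv.AssociatedPrimes.eq (LinearEquiv.funCongrLeft R M e.symm)]
  exact pi_fin_subset n

end associatedPrimes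

namespace Ideal

variable {R : Type*} [CommRing R]

theorem ofList_ofFn {n : ℕ} (z : Fin n → R) : ofList (List.ofFn z) = span (Set.range z) :=
  congrArg span (Set.ext fun r => List.mem_ofFn' z r)

theorem range_fintypeLinearCombination {ι : Type*} [Fintype ι] (z : ι → R) :
    LinearMap.range (Fintype.linearCombination R z) = span (Set.range z) :=
  Fintype.range_linearCombination R z

theorem isSMulRegular_quotient_smul_top_iff (J : Ideal R) (r : R) :
    IsSMulRegular (R ⧸ (J • ⊤ : Submodule R R)) r ↔ ∀ x, r * x ∈ J → x ∈ J := by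
  rw [smul_eq_mul, mul_top, isSMulRegular_quotient_iff_mem_of_smul_mem]
  rfl

end Ideal

namespace RingTheory.Sequence.IsWeaklyRegular

variable {R : Type*} [CommRing R]

theorem ker_linearCombination_le :
    ∀ {n : ℕ} {z : Fin n → R}, IsWeaklyRegular R (List.ofFn z) →
      LinearMap.ker (Fintype.linearCombination R z) ≤ pi Set.univ fun _ => Ideal.span (Set.range z)
  | 0, _, _, _, _ => fun i => i.elim0
  | n + 1, z, hz, c, hc => by
    rw [List.ofFn_succ', List.concat_eq_append, isWeaklyRegular_append_iff,
      isWeaklyRegular_singleton_iff, Ideal.ofList_ofFn,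
      Ideal.isSMulRegular_quotient_smul_top_iff] at hz
    rw [LinearMap.mem_ker, Fintype.linearCombination_apply, Fin.sum_univ_castSucc] at hc
    simp only [smul_eq_mul] at hc
    obtain ⟨hinit, hlast⟩ := hz
    set z' : Fin n → R := fun i => z i.castSucc
    have hlast_mem : c (Fin.last n) ∈ Ideal.span (Set.range z') := by
      refine hlast _ ?_
      have hmul : z (Fin.last n) * c (Fin.last n) =
          -Fintype.linearCombination R z' fun i => c i.castSucc := by
        rw [Fintype.linearCombination_apply]
        simp only [smul_eq_mul]
        linear_combination hc
      rw [hmul, ← Ideal.range_fintypeLinearCombination]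
      exact neg_mem (LinearMap.mem_range_self _ _)
    rw [← Ideal.range_fintypeLinearCombination] at hlast_mem
    obtain ⟨d, hd⟩ := hlast_mem
    -- Substituting `c_last = ∑ dᵢ zᵢ` turns the relation into one among the first `n` elements.
    have hker : (fun i => c i.castSucc + z (Fin.last n) * d i) ∈
        LinearMap.ker (Fintype.linearCombination R z') := by
      change Fintype.linearCombination R z' ((fun i => c i.castSucc) + z (Fin.last n) • d) = 0
      rw [map_add, map_smul, hd, Fintype.linearCombination_apply]
      simp only [smul_eq_mul]
      linear_combination hc
    have ih := ker_linearCombination_le hinit hker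
    have hspan_le : Ideal.span (Set.range z') ≤ Ideal.span (Set.range z) :=
      Ideal.span_mono (Set.range_comp_subset_range _ _)
    intro i _
    refine Fin.lastCases (hspan_le ?_) (fun i => ?_) i
    · rw [← hd, ← Ideal.range_fintypeLinearCombination]
      exact LinearMap.mem_range_self _ _
    have hz_last : z (Fin.last n) * d i ∈ Ideal.span (Set.range z) :=
      Ideal.mul_mem_right _ _ (Ideal.subset_span ⟨_, rfl⟩)
    exact (Ideal.add_mem_iff_left _ hz_last).mp (hspan_le (ih i (Set.mem_univ _)))

variable {n : ℕ} {z : Fin n → R} {I : Ideal R}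

theorem comap_linearCombination_mul (hz : IsWeaklyRegular R (List.ofFn z))
    (hI : Ideal.span (Set.range z) ≤ I) :
    comap (Fintype.linearCombination R z) (Ideal.span (Set.range z) * I) =
      pi Set.univ fun _ => I := by
  refine le_antisymm (fun c hc => ?_) fun c hc => ?_
  · have hle : Ideal.span (Set.range z) * I ≤
        (pi Set.univ fun _ => I).map (Fintype.linearCombination R z) := by
      refine Ideal.mul_le.mpr fun a ha b hb => ?_
      rw [← Ideal.range_fintypeLinearCombination] at ha
      obtain ⟨d, rfl⟩ := ha
      exact ⟨b • d, fun i _ => I.mul_mem_right _ hb, by rw [map_smul, smul_eq_mul, mul_comm]⟩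
    obtain ⟨d, hd, hdc⟩ := hle hc
    have hsyz := hz.ker_linearCombination_le
      (show c - d ∈ LinearMap.ker (Fintype.linearCombination R z) by
        rw [LinearMap.mem_ker, map_sub, hdc, sub_self])
    intro i _
    simpa using I.add_mem (hI (hsyz i trivial)) (hd i trivial)
  · rw [mem_comap, Fintype.linearCombination_apply]
    refine sum_mem fun i _ => ?_
    rw [smul_eq_mul, mul_comm (c i)]
    exact Ideal.mul_mem_mul (Ideal.subset_span ⟨i, rfl⟩) (hc i trivial)

theorem associatedPrimes_quotient_mul_subset (hz : IsWeaklyRegular R (List.ofFn z))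
    (hI : Ideal.span (Set.range z) ≤ I) :
    associatedPrimes R (R ⧸ (Ideal.span (Set.range z) * I)) ⊆
      associatedPrimes R (R ⧸ Ideal.span (Set.range z)) ∪ associatedPrimes R (R ⧸ I) := by
  set J := Ideal.span (Set.range z)
  let ψ : (Fin n → R) →ₗ[R] R ⧸ (J * I) := (J * I).mkQ ∘ₗ Fintype.linearCombination R z
  have hker : LinearMap.ker ψ = pi Set.univ fun _ => I := by
    rw [LinearMap.ker_comp, ker_mkQ, hz.comap_linearCombination_mul hI]
  let f := (pi Set.univ fun _ => I).liftQ ψ hker.ge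
  have hf : Function.Injective f := LinearMap.ker_eq_bot.mp (ker_liftQ_eq_bot _ _ _ hker.le)
  have hfg : Function.Exact f (factor (Ideal.mul_le_left : J * I ≤ J)) := by
    rw [LinearMap.exact_iff, range_liftQ, LinearMap.range_comp,
      Ideal.range_fintypeLinearCombination, ker_mapQ, comap_id]
  calc associatedPrimes R (R ⧸ (J * I))
      ⊆ associatedPrimes R ((Fin n → R) ⧸ pi Set.univ fun _ => I) ∪ associatedPrimes R (R ⧸ J) :=
        associatedPrimes.subset_union_of_exact hf hfg
    _ = associatedPrimes R (Fin n → R ⧸ I) ∪ associatedPrimes R (R ⧸ J) := by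
        rw [LinearEquiv.AssociatedPrimes.eq (quotientPi _)]
    _ ⊆ associatedPrimes R (R ⧸ J) ∪ associatedPrimes R (R ⧸ I) := by
        rw [Set.union_comm]
        exact Set.union_subset_union_right _ associatedPrimes.pi_subset

end RingTheory.Sequence.IsWeaklyRegular

theorem links_of_primes_stmt7_general {R : Type*} [CommRing R]
    (I J : Ideal R) (hJI : J ≤ I)
    (zs : List R)
    (hreg : IsRegular R zs) (hJ : J = Ideal.ofList zs) :
    associatedPrimes R (R ⧸ (J * I)) ⊆
      associatedPrimes R (R ⧸ J) ∪ associatedPrimes R (R ⧸ I) := by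
  rw [← List.ofFn_get zs] at hJ hreg
  rw [Ideal.ofList_ofFn] at hJ
  subst hJ
  exact hreg.toIsWeaklyRegular.associatedPrimes_quotient_mul_subset hJI

/-- Let `R` be Noetherian and `J ⊆ I` ideals with `J` generated by a
regular sequence `z₁, …, z_g`.  Then `Ass(R/JI) ⊆ Ass(R/J) ∪ Ass(R/I)`. -/
theorem links_of_primes_stmt7 {R : Type*} [CommRing R] [IsNoetherianRing R]
    (I J : Ideal R) (hJI : J ≤ I)
    (g : ℕ) (zs : List R) (hlen : zs.length = g)
    (hreg : IsRegular R zs) (hJ : J = Ideal.ofList zs) :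
    associatedPrimes R (R ⧸ (J * I)) ⊆
      associatedPrimes R (R ⧸ J) ∪ associatedPrimes R (R ⧸ I) :=
  links_of_primes_stmt7_general I J hJI zs hreg hJ
end

section
/- Let (R, m) be a Noetherian local ring and let J ⊆ I be ideals with m·I = m·J and I² = J·I. In the Rees algebra B = R[It] ⊆ R[t], let M be the ideal of B generated by m together with the elements at of degree one (a ∈ I), and let N' be the ideal of B generated by m together with the elements zt with z ∈ J. Then N'·M = M²; that is, N' is a reduction of the maximal homogeneous ideal M of R[It]. -/
open IsLocalRing Polynomial

/-- Let `(R, m)` be Noetherian local and `J ⊆ I` ideals with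
`m·I = m·J` and `I² = J·I`.  In the Rees algebra `B = R[It] ⊆ R[t]`, let `M` be the ideal
generated by `m` together with the degree-one elements `at` (`a ∈ I`), and `N'` the ideal
generated by `m` together with the `zt` (`z ∈ J`).  Then `N'·M = M²`, i.e. `N'` is a
reduction of the maximal homogeneous ideal `M` of `R[It]`. -/
theorem links_of_primes_stmt11 {R : Type*} [CommRing R] [IsLocalRing R] [IsNoetherianRing R]
    (I J : Ideal R) (hJI : J ≤ I)
    (hmI : maximalIdeal R * I = maximalIdeal R * J)
    (hred : I ^ 2 = J * I)
    (M N' : Ideal (reesAlgebra I))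
    (hM : M = Ideal.span
      ({x : reesAlgebra I | (x : R[X]) ∈ C '' (maximalIdeal R : Set R)} ∪
       {x : reesAlgebra I | ∃ a ∈ I, (x : R[X]) = C a * X}))
    (hN' : N' = Ideal.span
      ({x : reesAlgebra I | (x : R[X]) ∈ C '' (maximalIdeal R : Set R)} ∪
       {x : reesAlgebra I | ∃ z ∈ J, (x : R[X]) = C z * X})) :
    N' * M = M ^ 2 := by
  classical
  set S₀ : Set (reesAlgebra I) :=
    {x : reesAlgebra I | (x : R[X]) ∈ C '' (maximalIdeal R : Set R)} with hS₀
  set SI : Set (reesAlgebra I) :=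
    {x : reesAlgebra I | ∃ a ∈ I, (x : R[X]) = C a * X} with hSI
  set SJ : Set (reesAlgebra I) :=
    {x : reesAlgebra I | ∃ z ∈ J, (x : R[X]) = C z * X} with hSJ
  -- N' ≤ M
  have hNM : N' ≤ M := by
    rw [hM, hN']
    apply Ideal.span_mono
    rintro x (hx | ⟨z, hz, hx⟩)
    · exact Or.inl hx
    · exact Or.inr ⟨z, hJI hz, hx⟩
  -- key: elements whose polynomial is C c * X ^ 2 with c ∈ J * I lie in N' * M
  have key : ∀ c ∈ J * I, ∀ x : reesAlgebra I, (x : R[X]) = C c * X ^ 2 → x ∈ N' * M := by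
    intro c hc
    refine Submodule.mul_induction_on' (C := fun c _ =>
      ∀ x : reesAlgebra I, (x : R[X]) = C c * X ^ 2 → x ∈ N' * M) ?_ ?_ hc
    · intro j hj e he x hx
      have hjI : (C j * X : R[X]) ∈ reesAlgebra I := by
        rw [C_mul_X_eq_monomial, reesAlgebra.monomial_mem, pow_one]
        exact hJI hj
      have heI : (C e * X : R[X]) ∈ reesAlgebra I := by
        rw [C_mul_X_eq_monomial, reesAlgebra.monomial_mem, pow_one]
        exact he
      have hxeq : x = (⟨C j * X, hjI⟩ : reesAlgebra I) * ⟨C e * X, heI⟩ := by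
        apply Subtype.ext
        push_cast
        rw [hx, map_mul]
        ring
      rw [hxeq]
      refine Ideal.mul_mem_mul ?_ ?_
      · rw [hN']; exact Ideal.subset_span (Or.inr ⟨j, hj, rfl⟩)
      · rw [hM]; exact Ideal.subset_span (Or.inr ⟨e, he, rfl⟩)
    · intro c₁ hc₁ c₂ hc₂ ih₁ ih₂ x hx
      have hmem : ∀ d : R, d ∈ J * I → (C d * X ^ 2 : R[X]) ∈ reesAlgebra I := by
        intro d hd
        rw [C_mul_X_pow_eq_monomial, reesAlgebra.monomial_mem, hred]
        exact hd
      have h1 := hmem c₁ hc₁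
      have h2 := hmem c₂ hc₂
      have hxeq : x = (⟨C c₁ * X ^ 2, h1⟩ : reesAlgebra I) + ⟨C c₂ * X ^ 2, h2⟩ := by
        apply Subtype.ext
        push_cast
        rw [hx, map_add]
        ring
      rw [hxeq]
      exact Ideal.add_mem _ (ih₁ _ rfl) (ih₂ _ rfl)
  apply le_antisymm
  · rw [pow_two]
    exact Ideal.mul_mono hNM le_rfl
  · rw [pow_two]
    conv_lhs => rw [hM]
    rw [Ideal.span_mul_span', Ideal.span_le]
    rintro x ⟨s, hs, t, ht, rfl⟩
    show s * t ∈ (N' * M : Ideal (reesAlgebra I))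
    have hsM : s ∈ M := hM ▸ Ideal.subset_span hs
    have htM : t ∈ M := hM ▸ Ideal.subset_span ht
    rcases hs with hs | ⟨a, ha, hsa⟩
    · -- s is a constant in m, hence s ∈ N'
      have hsN : s ∈ N' := by
        rw [hN']; exact Ideal.subset_span (Or.inl hs)
      exact Ideal.mul_mem_mul hsN htM
    · rcases ht with ht | ⟨b, hb, htb⟩
      · -- t is a constant in m
        have htN : t ∈ N' := by
          rw [hN']; exact Ideal.subset_span (Or.inl ht)
        rw [mul_comm s t]
        exact Ideal.mul_mem_mul htN hsM
      · -- both degree one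
        have hab : a * b ∈ J * I := by
          rw [← hred, pow_two]
          exact Ideal.mul_mem_mul ha hb
        refine key (a * b) hab (s * t) ?_
        push_cast
        rw [hsa, htb, map_mul]
        ring
end
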